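/- Let E₁, E₂ be quantum channels on M_d(ℂ) with unital blocks T₁, T₂, and suppose E₁ is unital (E₁(I) = I). Then ⟨T₁, T₂⟩ = tr[T₁†T₂] ≥ −1. -/

import Mathlib

/-!
Complete the traceless orthonormal family `X` by `I/√d` to an orthonormal basis `Y` of `M_d(ℂ)`
for the Hilbert–Schmidt inner product. Over a whole orthonormal basis the double sum
`∑ a b, conj ⟪Y a, E₁ (Y b)⟫ * ⟪Y a, E₂ (Y b)⟫` is `tr (E₁† E₂)`, which does not depend on the
basis; in the basis of matrix units it is `tr (C₁† C₂)` for the Choi matrices `C₁, C₂`, a trace of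
a product of positive semidefinite matrices and hence nonnegative. Of the terms involving `I/√d`,
the diagonal one is `1` by unitality of `E₁` and trace preservation of `E₂`; the mixed ones vanish,
by trace preservation of `E₁` and by unitality of `E₁` together with `tr X i = 0`. Hence
`0 ≤ 1 + ⟨T₁, T₂⟩`.
-/

open Matrix ComplexOrder

/-- The Choi matrix of a linear map on matrices; the map is completely positive
iff this matrix is positive semidefinite. -/
noncomputable def choi {ι κ : Type*} [Fintype ι] [DecidableEq ι]
    (E : Matrix ι ι ℂ →ₗ[ℂ] Matrix κ κ ℂ) : Matrix (κ × ι) (κ × ι) ℂ :=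
  Matrix.of fun p q => E (Matrix.single p.2 q.2 1) p.1 q.1

open scoped InnerProductSpace ComplexConjugate

section InnerProductSpace

variable {𝕜 E F ι : Type*} [RCLike 𝕜] [Fintype ι]
  [NormedAddCommGroup E] [InnerProductSpace 𝕜 E] [FiniteDimensional 𝕜 E]
  [NormedAddCommGroup F] [InnerProductSpace 𝕜 F] [FiniteDimensional 𝕜 F]

theorem OrthonormalBasis.sum_inner_apply_apply_eq_trace (b : OrthonormalBasis ι 𝕜 E)
    (A B : E →ₗ[𝕜] F) :
    ∑ i, ⟪A (b i), B (b i)⟫_𝕜 = LinearMap.trace 𝕜 E (LinearMap.adjoint A ∘ₗ B) := by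
  simp [LinearMap.trace_eq_sum_inner _ b, LinearMap.adjoint_inner_right]

theorem OrthonormalBasis.sum_sum_conj_inner_mul_inner_eq_trace (b : OrthonormalBasis ι 𝕜 E)
    (A B : E →ₗ[𝕜] E) :
    ∑ i, ∑ j, conj ⟪b i, A (b j)⟫_𝕜 * ⟪b i, B (b j)⟫_𝕜 =
      LinearMap.trace 𝕜 E (LinearMap.adjoint A ∘ₗ B) := by
  rw [Finset.sum_comm, ← b.sum_inner_apply_apply_eq_trace]
  refine Finset.sum_congr rfl fun j _ => ?_
  simpa only [inner_conj_symm] using b.sum_inner_mul_inner (A (b j)) (B (b j))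

end InnerProductSpace

namespace Matrix

variable {𝕜 m n : Type*} [RCLike 𝕜]

noncomputable def vecL2 : Matrix m n 𝕜 ≃ₗ[𝕜] EuclideanSpace 𝕜 (n × m) where
  toFun A := WithLp.toLp 2 A.vec
  invFun v := of fun i j => v (j, i)
  map_add' A B := by simp [vec_add]
  map_smul' c A := by simp [vec_smul]
  left_inv A := rfl
  right_inv v := rfl

@[simp]
theorem vecL2_symm_apply (v : EuclideanSpace 𝕜 (n × m)) (i : m) (j : n) :
    vecL2.symm v i j = v (j, i) :=
  rfl

theorem inner_vecL2 [Fintype m] [Fintype n] (A B : Matrix m n 𝕜) :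
    ⟪vecL2 A, vecL2 B⟫_𝕜 = (Aᴴ * B).trace := by
  rw [EuclideanSpace.inner_eq_star_dotProduct, dotProduct_comm, ← star_vec_dotProduct_vec]
  rfl

theorem vecL2_symm_single [DecidableEq m] [DecidableEq n] (i : m) (j : n) :
    vecL2.symm (EuclideanSpace.single (j, i) (1 : 𝕜)) = single i j 1 := by
  ext k l
  simp [single_apply, eq_comm, and_comm]

end Matrix

theorem trace_conjTranspose_choi_mul_choi {ι κ : Type*} [Fintype ι] [DecidableEq ι] [Fintype κ]
    (E₁ E₂ : Matrix ι ι ℂ →ₗ[ℂ] Matrix κ κ ℂ) :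
    ((choi E₁)ᴴ * choi E₂).trace =
      ∑ l, ∑ k, ((E₁ (single k l 1))ᴴ * E₂ (single k l 1)).trace := by
  simp only [trace, diag, mul_apply, conjTranspose_apply, choi, of_apply, Fintype.sum_prod_type]
  rw [Finset.sum_comm]
  refine Finset.sum_congr rfl fun l _ => ?_
  conv_rhs => rw [Finset.sum_comm]
  exact Finset.sum_congr rfl fun p _ => Finset.sum_comm

theorem sum_sum_conj_trace_mul_trace_eq_trace_choi {ι n : Type*} [Fintype ι] [DecidableEq ι]
    [Fintype n] [DecidableEq n] (Y : ι → Matrix n n ℂ)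
    (hY : ∀ i j, ((Y i)ᴴ * Y j).trace = if i = j then 1 else 0)
    (hcard : Fintype.card ι = Fintype.card n ^ 2) (E₁ E₂ : Matrix n n ℂ →ₗ[ℂ] Matrix n n ℂ) :
    ∑ i, ∑ j, conj ((Y i)ᴴ * E₁ (Y j)).trace * ((Y i)ᴴ * E₂ (Y j)).trace =
      ((choi E₁)ᴴ * choi E₂).trace := by
  have hon : Orthonormal ℂ (vecL2 ∘ Y) := by
    rw [orthonormal_iff_ite]
    intro i j
    simpa [inner_vecL2] using hY i j
  have hspan : ⊤ ≤ Submodule.span ℂ (Set.range (vecL2 ∘ Y)) := by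
    refine (hon.linearIndependent.span_eq_top_of_card_eq_finrank' ?_).ge
    simp [hcard, sq]
  let b := OrthonormalBasis.mk hon hspan
  have hentry : ∀ (E : Matrix n n ℂ →ₗ[ℂ] Matrix n n ℂ) i j,
      ((Y i)ᴴ * E (Y j)).trace = ⟪b i, vecL2.conj E (b j)⟫_ℂ := by
    intro E i j
    simp [b, LinearEquiv.conj_apply, inner_vecL2]
  -- evaluate the basis-independent trace in the basis of matrix units instead
  simp_rw [hentry, b.sum_sum_conj_inner_mul_inner_eq_trace, trace_conjTranspose_choi_mul_choi,
    ← (EuclideanSpace.basisFun (n × n) ℂ).sum_inner_apply_apply_eq_trace]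
  simp [LinearEquiv.conj_apply, inner_vecL2, vecL2_symm_single, Fintype.sum_prod_type]

theorem Matrix.PosSemidef.trace_mul_nonneg {n 𝕜 : Type*} [Fintype n] [DecidableEq n] [RCLike 𝕜]
    {A B : Matrix n n 𝕜} (hA : A.PosSemidef) (hB : B.PosSemidef) : 0 ≤ (A * B).trace := by
  obtain ⟨C, rfl⟩ : ∃ C : Matrix n n 𝕜, A = star C * C := by
    open scoped MatrixOrder in exact CStarAlgebra.nonneg_iff_eq_star_mul_self.mp hA.nonneg
  rw [Matrix.mul_assoc, trace_mul_comm]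
  exact (hB.mul_mul_conjTranspose_same C).trace_nonneg

section NormalizedOne

variable {n ι : Type*} [Fintype n] [DecidableEq n]

noncomputable def normalizedOne (n : Type*) [Fintype n] [DecidableEq n] : Matrix n n ℂ :=
  (Real.sqrt (Fintype.card n) : ℂ)⁻¹ • 1

theorem trace_normalizedOne_conjTranspose_mul (M : Matrix n n ℂ) :
    ((normalizedOne n)ᴴ * M).trace = (Real.sqrt (Fintype.card n) : ℂ)⁻¹ * M.trace := by
  simp [normalizedOne, conjTranspose_smul, Complex.conj_ofReal]

theorem trace_normalizedOne_conjTranspose_mul_self [Nonempty n] :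
    ((normalizedOne n)ᴴ * normalizedOne n).trace = 1 := by
  rw [trace_normalizedOne_conjTranspose_mul, normalizedOne, trace_smul, trace_one, smul_eq_mul,
    ← mul_assoc, ← mul_inv, ← Complex.ofReal_mul, Real.mul_self_sqrt (Nat.cast_nonneg _)]
  simp

theorem trace_normalizedOne_conjTranspose_mul_eq_zero {M : Matrix n n ℂ} (hM : M.trace = 0) :
    ((normalizedOne n)ᴴ * M).trace = 0 := by
  rw [trace_normalizedOne_conjTranspose_mul, hM, mul_zero]

theorem trace_conjTranspose_mul_normalizedOne_eq_zero {M : Matrix n n ℂ} (hM : M.trace = 0) :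
    (Mᴴ * normalizedOne n).trace = 0 := by
  rw [← conjTranspose_conjTranspose (normalizedOne n), ← conjTranspose_mul, trace_conjTranspose,
    trace_normalizedOne_conjTranspose_mul_eq_zero hM, star_zero]

theorem trace_normalizedOne_conjTranspose_mul_map {E : Matrix n n ℂ →ₗ[ℂ] Matrix n n ℂ}
    (hE : ∀ ρ, (E ρ).trace = ρ.trace) (M : Matrix n n ℂ) :
    ((normalizedOne n)ᴴ * E M).trace = ((normalizedOne n)ᴴ * M).trace := by
  rw [trace_normalizedOne_conjTranspose_mul, trace_normalizedOne_conjTranspose_mul, hE]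

theorem map_normalizedOne {E : Matrix n n ℂ →ₗ[ℂ] Matrix n n ℂ} (hE : E 1 = 1) :
    E (normalizedOne n) = normalizedOne n := by
  rw [normalizedOne, map_smul, hE]

noncomputable def extendNormalizedOne (X : ι → Matrix n n ℂ) : Option ι → Matrix n n ℂ :=
  fun a => a.elim (normalizedOne n) X

@[simp]
theorem extendNormalizedOne_none (X : ι → Matrix n n ℂ) :
    extendNormalizedOne X none = normalizedOne n :=
  rfl

@[simp]
theorem extendNormalizedOne_some (X : ι → Matrix n n ℂ) (i : ι) :
    extendNormalizedOne X (some i) = X i :=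
  rfl

theorem trace_conjTranspose_mul_extendNormalizedOne [Nonempty n] [DecidableEq ι]
    {X : ι → Matrix n n ℂ} (hXtr : ∀ i, (X i).trace = 0)
    (hX : ∀ i j, ((X i)ᴴ * X j).trace = if i = j then 1 else 0) (a b : Option ι) :
    ((extendNormalizedOne X a)ᴴ * extendNormalizedOne X b).trace = if a = b then 1 else 0 := by
  rcases a with _ | i <;> rcases b with _ | j
  · exact trace_normalizedOne_conjTranspose_mul_self
  · simpa using trace_normalizedOne_conjTranspose_mul_eq_zero (hXtr j)
  · simpa using trace_conjTranspose_mul_normalizedOne_eq_zero (hXtr i)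
  · simpa using hX i j

end NormalizedOne

theorem T_inner_product_lower_bound_unital_general {d : ℕ} (hd : 0 < d)
    (E1 E2 : Matrix (Fin d) (Fin d) ℂ →ₗ[ℂ] Matrix (Fin d) (Fin d) ℂ)
    (hE1cp : (choi E1).PosSemidef) (hE1tp : ∀ ρ, (E1 ρ).trace = ρ.trace)
    (hE1unital : E1 (1 : Matrix (Fin d) (Fin d) ℂ) = 1)
    (hE2cp : (choi E2).PosSemidef) (hE2tp : ∀ ρ, (E2 ρ).trace = ρ.trace)
    (X : Fin (d ^ 2 - 1) → Matrix (Fin d) (Fin d) ℂ)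
    (hXtr : ∀ i, (X i).trace = 0)
    (hXortho : ∀ i j, ((X i)ᴴ * X j).trace = if i = j then 1 else 0) :
    (-1 : ℂ) ≤ ∑ i, ∑ j,
        (starRingEnd ℂ) (((X i)ᴴ * E1 (X j)).trace) * ((X i)ᴴ * E2 (X j)).trace := by
  have : Nonempty (Fin d) := ⟨⟨0, hd⟩⟩
  have hcard : Fintype.card (Option (Fin (d ^ 2 - 1))) = Fintype.card (Fin d) ^ 2 := by
    rw [Fintype.card_option, Fintype.card_fin, Fintype.card_fin,
      Nat.sub_add_cancel (Nat.one_le_pow _ _ hd)]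
  have hsum := sum_sum_conj_trace_mul_trace_eq_trace_choi _
    (trace_conjTranspose_mul_extendNormalizedOne hXtr hXortho) hcard E1 E2
  have hnonneg : 0 ≤ ((choi E1)ᴴ * choi E2).trace := by
    rw [hE1cp.isHermitian.eq]
    exact hE1cp.trace_mul_nonneg hE2cp
  simp only [Fintype.sum_option, extendNormalizedOne_none, extendNormalizedOne_some,
    map_normalizedOne hE1unital, trace_normalizedOne_conjTranspose_mul_map hE1tp,
    trace_normalizedOne_conjTranspose_mul_map hE2tp, trace_normalizedOne_conjTranspose_mul_self,
    trace_normalizedOne_conjTranspose_mul_eq_zero, trace_conjTranspose_mul_normalizedOne_eq_zero,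
    hXtr, map_one, map_zero, mul_one, zero_mul, Finset.sum_const_zero, add_zero, zero_add] at hsum
  rw [← hsum] at hnonneg
  exact neg_le_iff_add_nonneg'.mpr hnonneg

/-- For two quantum channels `E₁, E₂` on `M_d(ℂ)` with unital Liouville blocks `T₁, T₂`,
if `E₁` is unital then `⟨T₁, T₂⟩ = tr[T₁†T₂] ≥ −1`. -/
theorem T_inner_product_lower_bound_unital {d : ℕ} (hd : 0 < d)
    (E1 E2 : Matrix (Fin d) (Fin d) ℂ →ₗ[ℂ] Matrix (Fin d) (Fin d) ℂ)
    (hE1cp : (choi E1).PosSemidef) (hE1tp : ∀ ρ, (E1 ρ).trace = ρ.trace)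
    (hE1unital : E1 (1 : Matrix (Fin d) (Fin d) ℂ) = 1)
    (hE2cp : (choi E2).PosSemidef) (hE2tp : ∀ ρ, (E2 ρ).trace = ρ.trace)
    (X : Fin (d ^ 2 - 1) → Matrix (Fin d) (Fin d) ℂ)
    (hXtr : ∀ i, (X i).trace = 0)
    (hXherm : ∀ i, (X i)ᴴ = X i)
    (hXortho : ∀ i j, ((X i)ᴴ * X j).trace = if i = j then 1 else 0) :
    (-1 : ℂ) ≤ ∑ i, ∑ j,
        (starRingEnd ℂ) (((X i)ᴴ * E1 (X j)).trace) * ((X i)ᴴ * E2 (X j)).trace :=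
  T_inner_product_lower_bound_unital_general hd E1 E2 hE1cp hE1tp hE1unital hE2cp hE2tp X hXtr
    hXortho
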